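/- Let σ be a locally finite positive Borel measure on ℝ^n. (i) For every cube Q and every 0 < ε < ℓ(Q)/2: σ( (1 − 2ε/ℓ(Q))Q ) ≤ σ_ε(Q) ≤ σ( (1 + 2ε/ℓ(Q))Q ); in particular, if σ(∂Q) = 0 then lim_{ε→0} σ_ε(Q) = σ(Q). (ii) If ω is another locally finite positive Borel measure, μ = σ + ω, and Q ∈ P^null(μ), then for every x ∈ ℝ^n: M^null(1_Q σ)(x) ≤ liminf_{ε→0} M(1_Q σ_ε)(x). -/

import Mathlib

open MeasureTheory Set Filter
open scoped ENNReal NNReal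

noncomputable section

/-- An axis-parallel half-open cube in `ℝⁿ`, given by its lower corner and (positive)
side length. -/
structure Cube (n : ℕ) where
  corner : Fin n → ℝ
  side : ℝ
  side_pos : 0 < side

namespace Cube

variable {n : ℕ}

/-- The underlying (half-open) set of the cube. -/
def toSet (Q : Cube n) : Set (Fin n → ℝ) :=
  {x | ∀ i, Q.corner i ≤ x i ∧ x i < Q.corner i + Q.side}

/-- The concentric dilate `ΓQ` of the cube `Q` (same center, side length `Γ·ℓ(Q)`),
as a set. -/
def dilate (Q : Cube n) (Γ : ℝ) : Set (Fin n → ℝ) :=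
  {x | ∀ i, Q.corner i - (Γ - 1) * Q.side / 2 ≤ x i ∧
       x i < Q.corner i + Q.side + (Γ - 1) * Q.side / 2}

/-- Membership in `𝒫ⁿ`: the side length is an integral power of `2`. -/
def memP (Q : Cube n) : Prop := ∃ ℓ : ℤ, Q.side = (2:ℝ) ^ ℓ

end Cube

/-- The translation applied at scale `2^ℓ` in the random dyadic grid determined by `β`:
`Σ_{j : 2^{-j} < 2^ℓ} 2^{-j} β_j`. -/
def gridShift {n : ℕ} (β : ℤ → Fin n → Bool) (ℓ : ℤ) (i : Fin n) : ℝ :=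
  ∑' j : ℤ, if (2:ℝ) ^ (-j) < (2:ℝ) ^ ℓ ∧ β j i = true then (2:ℝ) ^ (-j) else 0

/-- Membership in the shifted dyadic grid `𝒟^β`. -/
def memGrid {n : ℕ} (β : ℤ → Fin n → Bool) (Q : Cube n) : Prop :=
  ∃ (ℓ : ℤ) (k : Fin n → ℤ), Q.side = (2:ℝ) ^ ℓ ∧
    ∀ i, Q.corner i = (2:ℝ) ^ ℓ * (k i : ℝ) + gridShift β ℓ i

/-- The Hardy–Littlewood maximal function of a measure, over cubes in `𝒫ⁿ`. -/
def maximal {n : ℕ} (μ : Measure (Fin n → ℝ)) (x : Fin n → ℝ) : ℝ≥0∞ :=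
  ⨆ (Q : Cube n) (_ : Q.memP) (_ : x ∈ Q.toSet), μ Q.toSet / volume Q.toSet

/-- The dyadic maximal function relative to the grid `𝒟^β`. -/
def dyadicMaximal {n : ℕ} (β : ℤ → Fin n → Bool) (μ : Measure (Fin n → ℝ))
    (x : Fin n → ℝ) : ℝ≥0∞ :=
  ⨆ (Q : Cube n) (_ : memGrid β Q) (_ : x ∈ Q.toSet), μ Q.toSet / volume Q.toSet

/-- The two-weight Muckenhoupt constant `A₂(σ,ω)`. -/
def A2 {n : ℕ} (σ ω : Measure (Fin n → ℝ)) : ℝ≥0∞ :=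
  ⨆ (Q : Cube n) (_ : Q.memP), (σ Q.toSet / volume Q.toSet) * (ω Q.toSet / volume Q.toSet)

/-- The operator norm `𝔑_M(σ,ω)` of the maximal function from `L²(σ)` to `L²(ω)`:
the least `N` with `∫ M(fσ)² dω ≤ N² ∫ f² dσ` for all (nonnegative) `f`. -/
def opNorm {n : ℕ} (σ ω : Measure (Fin n → ℝ)) : ℝ≥0∞ :=
  sInf {N : ℝ≥0∞ | ∀ f : (Fin n → ℝ) → ℝ≥0∞, Measurable f →
    ∫⁻ x, (maximal (σ.withDensity f) x) ^ 2 ∂ω ≤ N ^ 2 * ∫⁻ x, (f x) ^ 2 ∂σ}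

/-- `φ` is an admissible mollifier on `ℝⁿ`: smooth, `0 ≤ φ ≤ 1`, supported in `(−1,1)ⁿ`,
at least `2^{−n}` on `(−5/8,5/8)ⁿ`, with `∫ φ = 1`. -/
def IsAdmissibleMollifier {n : ℕ} (φ : (Fin n → ℝ) → ℝ) : Prop :=
  ContDiff ℝ (⊤ : ℕ∞) φ ∧
  (∀ x, φ x ∈ Set.Icc (0:ℝ) 1) ∧
  (∀ x, φ x ≠ 0 → ∀ i, |x i| < 1) ∧
  (∀ x : Fin n → ℝ, (∀ i, |x i| < 5/8) → (2:ℝ) ^ (-(n:ℤ)) ≤ φ x) ∧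
  (∫ x, φ x) = 1

/-- The mollification `ν_δ = ν ∗ φ_δ` of a measure `ν`, where `φ_δ(x) = δ^{−n} φ(x/δ)`:
the measure with density `x ↦ ∫ φ_δ(x−y) dν(y)` with respect to Lebesgue measure. -/
def mollify {n : ℕ} (φ : (Fin n → ℝ) → ℝ) (δ : ℝ) (ν : Measure (Fin n → ℝ)) :
    Measure (Fin n → ℝ) :=
  volume.withDensity fun x => ∫⁻ y, ENNReal.ofReal ((δ ^ n)⁻¹ * φ (δ⁻¹ • (x - y))) ∂ν

/-- The grid `𝒟^β` has `μ`-null boundaries. -/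
def nullBoundaryGrid {n : ℕ} (μ : Measure (Fin n → ℝ)) (β : ℤ → Fin n → Bool) : Prop :=
  ∀ Q : Cube n, memGrid β Q → μ (frontier Q.toSet) = 0

/-- The maximal function `M^null` over cubes belonging to shifted dyadic grids all of
whose cubes have `μ`-null boundary. -/
def maximalNull {n : ℕ} (μ f : Measure (Fin n → ℝ)) (x : Fin n → ℝ) : ℝ≥0∞ :=
  ⨆ (Q : Cube n) (_ : ∃ β : ℤ → Fin n → Bool, nullBoundaryGrid μ β ∧ memGrid β Q)
    (_ : x ∈ Q.toSet), f Q.toSet / volume Q.toSet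

/-!
`φ_ε` is a probability density supported in the open sup-norm ball of radius `ε`, so by Tonelli
`σ_ε(s) = ∫ (∫_s φ_ε(x - y) dx) dσ(y)`, and the inner integral is `1` when `B(y, ε) ⊆ s` and `0`
when `y` is outside the `ε`-thickening of `s`. Hence `σ_ε(s)` lies between the `σ`-measures of
`{y | B(y, ε) ⊆ s}` and of the `ε`-thickening of `s`; as `ε → 0⁺` these sets increase to the
interior and decrease to the closure of `s`, which have the same `σ`-measure as `s` when
`σ(∂s) = 0`. For the maximal functions, a cube `R` of a `μ`-null grid meets `Q` in a set with
`σ`-null boundary, and `σ_ε(R ∩ Q) / |R|` is one of the averages defining `M(1_Q σ_ε)(x)`.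
-/

open Metric Topology

section ContinuityFromBelow

variable {α ι : Type*} [MeasurableSpace α] {μ : Measure α}
  [LinearOrder ι] [TopologicalSpace ι] [OrderTopology ι] [FirstCountableTopology ι]

theorem tendsto_measure_biUnion_gt {s : ι → Set α} {a : ι}
    (hm : ∀ i j, a < i → i ≤ j → s j ⊆ s i) :
    Tendsto (μ ∘ s) (𝓝[>] a) (𝓝 (μ (⋃ r > a, s r))) := by
  by_cases ha : Order.IsPredPrelimit a
  · have : (atBot : Filter (Ioi a)).IsCountablyGenerated := by
      rw [← comap_coe_Ioi_nhdsGT a ha]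
      infer_instance
    simp_rw [← map_coe_Ioi_atBot a ha, tendsto_map'_iff, ← mem_Ioi, biUnion_eq_iUnion]
    exact tendsto_measure_iUnion_atBot fun i j h ↦ hm i j i.2 h
  · rw [Order.not_isPredPrelimit_iff] at ha
    rcases ha with ⟨b, hab⟩
    simp [hab.nhdsGT]

end ContinuityFromBelow

section Thickening

variable {α : Type*} [PseudoMetricSpace α] {s t : Set α} {δ : ℝ}

theorem iUnion_compl_thickening_compl (s : Set α) :
    ⋃ δ > (0 : ℝ), (thickening δ sᶜ)ᶜ = interior s := by
  rw [← compl_iInter₂, ← closure_eq_iInter_thickening, closure_compl, compl_compl]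

theorem subset_compl_thickening_compl (h : thickening δ t ⊆ s) : t ⊆ (thickening δ sᶜ)ᶜ :=
  (subset_compl_thickening_compl_thickening_self δ t).trans <|
    compl_subset_compl.2 <| thickening_subset_of_subset δ <| compl_subset_compl.2 h

theorem ball_subset_of_mem_compl_thickening_compl {y : α} (hy : y ∈ (thickening δ sᶜ)ᶜ) :
    ball y δ ⊆ s := by
  simpa [thickening_singleton] using
    (thickening_subset_of_subset δ (singleton_subset_iff.2 hy)).trans
      (thickening_compl_thickening_self_subset_compl δ sᶜ)

variable [MeasurableSpace α] {μ : Measure α}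

theorem tendsto_measure_compl_thickening_compl (s : Set α) :
    Tendsto (fun δ ↦ μ (thickening δ sᶜ)ᶜ) (𝓝[>] 0) (𝓝 (μ (interior s))) := by
  rw [← iUnion_compl_thickening_compl]
  exact tendsto_measure_biUnion_gt fun _ _ _ hij ↦ compl_subset_compl.2 (thickening_mono hij _)

end Thickening

section Mollification

variable {n : ℕ} {φ : (Fin n → ℝ) → ℝ} {δ : ℝ}

def mollifierKernel (φ : (Fin n → ℝ) → ℝ) (δ : ℝ) (z : Fin n → ℝ) : ℝ≥0∞ :=
  ENNReal.ofReal ((δ ^ n)⁻¹ * φ (δ⁻¹ • z))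

theorem mollify_eq_withDensity (φ : (Fin n → ℝ) → ℝ) (δ : ℝ)
    (ν : Measure (Fin n → ℝ)) :
    mollify φ δ ν = volume.withDensity fun x ↦ ∫⁻ y, mollifierKernel φ δ (x - y) ∂ν :=
  rfl

namespace IsAdmissibleMollifier

variable (hφ : IsAdmissibleMollifier φ)
include hφ

theorem continuous : Continuous φ := hφ.1.continuous

theorem nonneg (x : Fin n → ℝ) : 0 ≤ φ x := (hφ.2.1 x).1

/-- `Fin n → ℝ` carries the sup norm, so `(-1, 1)ⁿ` is its open unit ball. -/
theorem norm_lt_one {x : Fin n → ℝ} (hx : φ x ≠ 0) : ‖x‖ < 1 :=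
  (pi_norm_lt_iff one_pos).2 fun i ↦ by simpa using hφ.2.2.1 x hx i

theorem integrable : Integrable φ := by
  refine hφ.continuous.integrable_of_hasCompactSupport
    (HasCompactSupport.intro (isCompact_closedBall 0 1) fun x hx ↦ ?_)
  by_contra h
  exact hx (mem_closedBall_zero_iff.2 (hφ.norm_lt_one h).le)

theorem integral_eq_one : ∫ x, φ x = 1 := hφ.2.2.2.2

theorem measurable_mollifierKernel : Measurable (mollifierKernel φ δ) := by
  have := hφ.continuous
  unfold mollifierKernel
  fun_prop

theorem lintegral_mollifierKernel (hδ : 0 < δ) : ∫⁻ z, mollifierKernel φ δ z = 1 := by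
  have hδn : 0 < δ ^ n := pow_pos hδ n
  unfold mollifierKernel
  rw [← ofReal_integral_eq_lintegral_ofReal
    ((hφ.integrable.comp_smul (inv_ne_zero hδ.ne')).const_mul _)
    (Eventually.of_forall fun z ↦ mul_nonneg (inv_nonneg.2 hδn.le) (hφ.nonneg _)),
    integral_const_mul, Measure.integral_comp_inv_smul_of_nonneg _ _ hδ.le, Module.finrank_fin_fun,
    hφ.integral_eq_one, smul_eq_mul, mul_one, inv_mul_cancel₀ hδn.ne', ENNReal.ofReal_one]

theorem mollifierKernel_eq_zero (hδ : 0 < δ) {z : Fin n → ℝ} (hz : δ ≤ ‖z‖) :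
    mollifierKernel φ δ z = 0 := by
  by_contra h
  have hφz : φ (δ⁻¹ • z) ≠ 0 := fun h0 ↦ h (by simp [mollifierKernel, h0])
  have := hφ.norm_lt_one hφz
  rw [norm_smul, norm_inv, Real.norm_of_nonneg hδ.le, inv_mul_lt_iff₀ hδ, mul_one] at this
  linarith

theorem mollify_apply {ν : Measure (Fin n → ℝ)} [SFinite ν] {s : Set (Fin n → ℝ)}
    (hs : MeasurableSet s) :
    mollify φ δ ν s = ∫⁻ y, (∫⁻ x in s, mollifierKernel φ δ (x - y)) ∂ν := by
  rw [mollify_eq_withDensity, withDensity_apply _ hs]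
  exact lintegral_lintegral_swap (hφ.measurable_mollifierKernel.comp measurable_sub).aemeasurable

variable (hδ : 0 < δ)
include hδ

theorem setLIntegral_mollifierKernel_sub_le_one (s : Set (Fin n → ℝ)) (y : Fin n → ℝ) :
    ∫⁻ x in s, mollifierKernel φ δ (x - y) ≤ 1 :=
  (setLIntegral_le_lintegral _ _).trans_eq <| by
    rw [lintegral_sub_right_eq_self (mollifierKernel φ δ) y, hφ.lintegral_mollifierKernel hδ]

theorem setLIntegral_mollifierKernel_sub_eq_one {s : Set (Fin n → ℝ)} {y : Fin n → ℝ}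
    (hy : ball y δ ⊆ s) : ∫⁻ x in s, mollifierKernel φ δ (x - y) = 1 := by
  rw [setLIntegral_eq_of_support_subset, lintegral_sub_right_eq_self (mollifierKernel φ δ) y,
    hφ.lintegral_mollifierKernel hδ]
  refine fun x hx ↦ hy (mem_ball_iff_norm.2 (not_le.1 fun h ↦ hx ?_))
  exact hφ.mollifierKernel_eq_zero hδ h

theorem setLIntegral_mollifierKernel_sub_eq_zero {s : Set (Fin n → ℝ)} (hs : MeasurableSet s)
    {y : Fin n → ℝ} (hy : y ∉ thickening δ s) :
    ∫⁻ x in s, mollifierKernel φ δ (x - y) = 0 := by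
  refine setLIntegral_eq_zero hs fun x hx ↦ hφ.mollifierKernel_eq_zero hδ ?_
  by_contra! h
  exact hy (mem_thickening_iff.2 ⟨x, hx, by rwa [dist_comm, dist_eq_norm]⟩)

variable {σ : Measure (Fin n → ℝ)} [SFinite σ] {s : Set (Fin n → ℝ)}
  (hs : MeasurableSet s)
include hs

theorem mollify_apply_le_thickening : mollify φ δ σ s ≤ σ (thickening δ s) := by
  rw [hφ.mollify_apply hs, ← lintegral_indicator_one isOpen_thickening.measurableSet]
  refine lintegral_mono fun y ↦ ?_
  by_cases hy : y ∈ thickening δ s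
  · simpa [hy] using hφ.setLIntegral_mollifierKernel_sub_le_one hδ s y
  · simp [hy, hφ.setLIntegral_mollifierKernel_sub_eq_zero hδ hs hy]

theorem compl_thickening_compl_le_mollify_apply :
    σ (thickening δ sᶜ)ᶜ ≤ mollify φ δ σ s := by
  rw [hφ.mollify_apply hs,
    ← lintegral_indicator_one isOpen_thickening.isClosed_compl.measurableSet]
  refine lintegral_mono fun y ↦ ?_
  by_cases hy : y ∈ (thickening δ sᶜ)ᶜ
  · have hball := ball_subset_of_mem_compl_thickening_compl hy
    simp [hy, hφ.setLIntegral_mollifierKernel_sub_eq_one hδ hball]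
  · simp [hy]

end IsAdmissibleMollifier

section MollifyLimits

variable (hφ : IsAdmissibleMollifier φ) {σ : Measure (Fin n → ℝ)} {s : Set (Fin n → ℝ)}
  (hs : MeasurableSet s)
include hφ hs

theorem tendsto_mollify_apply [IsLocallyFiniteMeasure σ] (hsb : Bornology.IsBounded s)
    (hfr : σ (frontier s) = 0) :
    Tendsto (fun δ ↦ mollify φ δ σ s) (𝓝[>] 0) (𝓝 (σ s)) := by
  have hlower := tendsto_measure_compl_thickening_compl (μ := σ) s
  have hupper :=
    tendsto_measure_thickening (μ := σ) ⟨1, one_pos, hsb.thickening.measure_lt_top.ne⟩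
  rw [measure_interior_of_null_frontier hfr] at hlower
  rw [measure_closure_of_null_frontier hfr] at hupper
  refine tendsto_of_tendsto_of_tendsto_of_le_of_le' hlower hupper ?_ ?_ <;>
    filter_upwards [self_mem_nhdsWithin] with δ hδ
  exacts [hφ.compl_thickening_compl_le_mollify_apply hδ hs,
    hφ.mollify_apply_le_thickening hδ hs]

theorem measure_interior_le_liminf_mollify_apply [SFinite σ] :
    σ (interior s) ≤ liminf (fun δ ↦ mollify φ δ σ s) (𝓝[>] 0) :=
  calc σ (interior s) = liminf (fun δ ↦ σ (thickening δ sᶜ)ᶜ) (𝓝[>] 0) :=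
        (tendsto_measure_compl_thickening_compl s).liminf_eq.symm
    _ ≤ liminf (fun δ ↦ mollify φ δ σ s) (𝓝[>] 0) := by
        refine liminf_le_liminf ?_
        filter_upwards [self_mem_nhdsWithin] with δ hδ
        exact hφ.compl_thickening_compl_le_mollify_apply hδ hs

end MollifyLimits

namespace Cube

theorem toSet_eq_pi (Q : Cube n) :
    Q.toSet = univ.pi fun i ↦ Ico (Q.corner i) (Q.corner i + Q.side) := by
  ext x; simp [toSet]

theorem dilate_one (Q : Cube n) : Q.dilate 1 = Q.toSet := by
  ext x; simp [dilate, toSet]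

theorem measurableSet_toSet (Q : Cube n) : MeasurableSet Q.toSet :=
  Q.toSet_eq_pi ▸ MeasurableSet.univ_pi fun _ ↦ measurableSet_Ico

theorem isBounded_toSet (Q : Cube n) : Bornology.IsBounded Q.toSet :=
  Q.toSet_eq_pi ▸ Bornology.IsBounded.pi fun _ ↦ Metric.isBounded_Ico _ _

theorem thickening_dilate_subset (Q : Cube n) (Γ ε : ℝ) :
    thickening ε (Q.dilate Γ) ⊆ Q.dilate (Γ + 2 * ε / Q.side) := by
  intro x hx
  obtain ⟨y, hy, hxy⟩ := mem_thickening_iff.1 hx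
  have hε : 0 < ε := dist_nonneg.trans_lt hxy
  have hside : (Γ + 2 * ε / Q.side - 1) * Q.side / 2 = (Γ - 1) * Q.side / 2 + ε := by
    field_simp [Q.side_pos.ne']
    ring
  intro i
  have hxyi := abs_lt.1 (Real.dist_eq _ _ ▸ (dist_pi_lt_iff hε).1 hxy i)
  have hyi := hy i
  rw [hside]
  constructor <;> linarith [hyi.1, hyi.2]

end Cube

theorem memGrid.memP {β : ℤ → Fin n → Bool} {Q : Cube n} (h : memGrid β Q) : Q.memP :=
  let ⟨ℓ, _, hℓ, _⟩ := h
  ⟨ℓ, hℓ⟩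

theorem IsAdmissibleMollifier.restrict_apply_div_volume_le_liminf_maximal
    (hφ : IsAdmissibleMollifier φ) {σ : Measure (Fin n → ℝ)} [SFinite σ] {Q R : Cube n}
    (hR : R.memP) (hfr : σ (frontier (R.toSet ∩ Q.toSet)) = 0) {x : Fin n → ℝ}
    (hx : x ∈ R.toSet) :
    σ.restrict Q.toSet R.toSet / volume R.toSet ≤
      liminf (fun δ ↦ maximal ((mollify φ δ σ).restrict Q.toSet) x) (𝓝[>] 0) := by
  set c := (volume R.toSet)⁻¹
  have hs := R.measurableSet_toSet.inter Q.measurableSet_toSet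
  calc σ.restrict Q.toSet R.toSet / volume R.toSet
      = σ (interior (R.toSet ∩ Q.toSet)) * liminf (fun _ : ℝ ↦ c) (𝓝[>] 0) := by
        rw [Measure.restrict_apply R.measurableSet_toSet, measure_interior_of_null_frontier hfr,
          liminf_const, div_eq_mul_inv]
    _ ≤ liminf (fun δ ↦ mollify φ δ σ (R.toSet ∩ Q.toSet)) (𝓝[>] 0) *
          liminf (fun _ : ℝ ↦ c) (𝓝[>] 0) := by
        gcongr
        exact measure_interior_le_liminf_mollify_apply hφ hs
    _ ≤ liminf (fun δ ↦ mollify φ δ σ (R.toSet ∩ Q.toSet) * c) (𝓝[>] 0) :=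
        ENNReal.le_liminf_mul
    _ ≤ liminf (fun δ ↦ maximal ((mollify φ δ σ).restrict Q.toSet) x) (𝓝[>] 0) := by
        refine liminf_le_liminf (Eventually.of_forall fun δ ↦ ?_)
        rw [← div_eq_mul_inv, ← Measure.restrict_apply R.measurableSet_toSet]
        unfold maximal
        exact le_iSup₂_of_le R hR (le_iSup_of_le hx le_rfl)

end Mollification

theorem mollified_measure_convergence_general
    {n : ℕ} (φ : (Fin n → ℝ) → ℝ) (hφ : IsAdmissibleMollifier φ)
    (σ ω : Measure (Fin n → ℝ))
    (hσ : IsLocallyFiniteMeasure σ) :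
    (∀ Q : Cube n, ∀ ε : ℝ, 0 < ε → ε < Q.side / 2 →
      σ (Q.dilate (1 - 2 * ε / Q.side)) ≤ mollify φ ε σ Q.toSet ∧
      mollify φ ε σ Q.toSet ≤ σ (Q.dilate (1 + 2 * ε / Q.side))) ∧
    (∀ Q : Cube n, σ (frontier Q.toSet) = 0 →
      Filter.Tendsto (fun ε : ℝ => mollify φ ε σ Q.toSet)
        (nhdsWithin 0 (Set.Ioi 0)) (nhds (σ Q.toSet))) ∧
    (∀ Q : Cube n,
      (∃ β : ℤ → Fin n → Bool, nullBoundaryGrid (σ + ω) β ∧ memGrid β Q) →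
      ∀ x : Fin n → ℝ,
        maximalNull (σ + ω) (σ.restrict Q.toSet) x ≤
          Filter.liminf (fun ε : ℝ => maximal ((mollify φ ε σ).restrict Q.toSet) x)
            (nhdsWithin 0 (Set.Ioi 0))) := by
  have := hσ
  have hnull : ∀ s, (σ + ω) s = 0 → σ s = 0 := fun s h ↦ by simp_all
  refine ⟨fun Q ε hε _ ↦ ⟨?_, ?_⟩, fun Q hQ ↦ ?_, ?_⟩
  · refine (measure_mono (subset_compl_thickening_compl ?_)).trans
      (hφ.compl_thickening_compl_le_mollify_apply hε Q.measurableSet_toSet)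
    simpa [Q.dilate_one] using Q.thickening_dilate_subset (1 - 2 * ε / Q.side) ε
  · refine (hφ.mollify_apply_le_thickening hε Q.measurableSet_toSet).trans (measure_mono ?_)
    simpa [Q.dilate_one] using Q.thickening_dilate_subset 1 ε
  · exact tendsto_mollify_apply hφ Q.measurableSet_toSet Q.isBounded_toSet hQ
  · rintro Q ⟨β, hβ, hQ⟩ x
    refine iSup₂_le fun R ⟨β', hβ', hR⟩ ↦ iSup_le fun hx ↦ ?_
    refine hφ.restrict_apply_div_volume_le_liminf_maximal hR.memP
      (measure_mono_null (frontier_inter_subset _ _) ?_) hx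
    exact measure_union_null (measure_mono_null inter_subset_left (hnull _ (hβ' R hR)))
      (measure_mono_null inter_subset_right (hnull _ (hβ Q hQ)))

/-- **Convergence of mollified measures of cubes.**
(i) For every cube `Q` and `0 < ε < ℓ(Q)/2`:
`σ((1 − 2ε/ℓ(Q))Q) ≤ σ_ε(Q) ≤ σ((1 + 2ε/ℓ(Q))Q)`; in particular, if `σ(∂Q) = 0` then
`σ_ε(Q) → σ(Q)` as `ε → 0⁺`.
(ii) If `ω` is another locally finite measure, `μ = σ + ω` and `Q ∈ 𝒫^null(μ)`, then for
every `x`: `M^null(1_Q σ)(x) ≤ liminf_{ε→0⁺} M(1_Q σ_ε)(x)`. -/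
theorem mollified_measure_convergence
    {n : ℕ} (φ : (Fin n → ℝ) → ℝ) (hφ : IsAdmissibleMollifier φ)
    (σ ω : Measure (Fin n → ℝ))
    (hσ : IsLocallyFiniteMeasure σ) (hω : IsLocallyFiniteMeasure ω) :
    (∀ Q : Cube n, ∀ ε : ℝ, 0 < ε → ε < Q.side / 2 →
      σ (Q.dilate (1 - 2 * ε / Q.side)) ≤ mollify φ ε σ Q.toSet ∧
      mollify φ ε σ Q.toSet ≤ σ (Q.dilate (1 + 2 * ε / Q.side))) ∧
    (∀ Q : Cube n, σ (frontier Q.toSet) = 0 →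
      Filter.Tendsto (fun ε : ℝ => mollify φ ε σ Q.toSet)
        (nhdsWithin 0 (Set.Ioi 0)) (nhds (σ Q.toSet))) ∧
    (∀ Q : Cube n,
      (∃ β : ℤ → Fin n → Bool, nullBoundaryGrid (σ + ω) β ∧ memGrid β Q) →
      ∀ x : Fin n → ℝ,
        maximalNull (σ + ω) (σ.restrict Q.toSet) x ≤
          Filter.liminf (fun ε : ℝ => maximal ((mollify φ ε σ).restrict Q.toSet) x)
            (nhdsWithin 0 (Set.Ioi 0))) :=
  mollified_measure_convergence_general φ hφ σ ω hσ
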